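/- arXiv:1903.10145 — 2 statements merged into one kernel-verified Lean document; each statement's English description precedes it below -/
import Mathlib

section
/- Let Z be a nonempty finite type, let N be a positive integer indexing data samples, let q(·|n) for each n ∈ {1,…,N} be a probability mass function on Z (the encoder posteriors), and let p(·|z) for each z ∈ Z be a probability mass function on {1,…,N} (the decoder), with p(n|z) > 0 whenever q(z|n) > 0. Define the joint distribution q(z,n) = q(z|n)·(1/N) on Z × {1,…,N}. Then the expected reconstruction log-likelihood plus the entropy of the uniform index distribution lower-bounds the mutual information: (1/N)·∑_{n} ∑_{z: q(z|n)>0} q(z|n) log p(n|z) + log N ≤ I_q(Z,n), i.e., the reconstruction term F_E = E_{q(z,n)}[log p(n|z)] + H_q(n) satisfies F_E ≤ I_q(Z,n). -/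
/-!
Writing `q(n|z) = q(z|n) / ∑ₙ' q(z|n')` for the posterior of the index, the gap between the two
sides is a weighted sum over `z` of `∑ₙ q(n|z) log q(n|z) - ∑ₙ q(n|z) log p(n|z)`, and each of
these is nonnegative by Gibbs' inequality, which in turn is `log x ≤ x - 1` summed over `n`.
-/

open Finset Real

lemma mul_log_le_mul_log_div_add {a p A : ℝ} (ha : 0 < a) (hp : 0 < p) (hA : 0 < A) :
    a * log p ≤ a * log (a / A) + (A * p - a) := by
  have hlog : log (A * p / a) ≤ A * p / a - 1 := log_le_sub_one_of_pos (by positivity)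
  have hsplit : log p = log (a / A) + log (A * p / a) := by
    rw [← log_mul (by positivity) (by positivity)]
    field_simp
  calc a * log p = a * log (a / A) + a * log (A * p / a) := by rw [hsplit, mul_add]
    _ ≤ a * log (a / A) + a * (A * p / a - 1) := by gcongr
    _ = a * log (a / A) + (A * p - a) := by field_simp

lemma sum_mul_log_le_sum_mul_log_div_sum {ι : Type*} {s : Finset ι} {a p : ι → ℝ}
    (ha : ∀ i ∈ s, 0 < a i) (hp : ∀ i ∈ s, 0 < p i) (hp_sum : ∑ i ∈ s, p i ≤ 1) :
    ∑ i ∈ s, a i * log (p i) ≤ ∑ i ∈ s, a i * log (a i / ∑ j ∈ s, a j) := by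
  rcases s.eq_empty_or_nonempty with rfl | ⟨i₀, hi₀⟩
  · simp
  set A := ∑ j ∈ s, a j
  have hA : 0 < A := sum_pos ha ⟨i₀, hi₀⟩
  have hterm : ∀ i ∈ s, a i * log (p i) ≤ a i * log (a i / A) + (A * p i - a i) :=
    fun i hi => mul_log_le_mul_log_div_add (ha i hi) (hp i hi) hA
  have hrest : ∑ i ∈ s, (A * p i - a i) ≤ 0 := by
    rw [sum_sub_distrib, ← mul_sum]
    nlinarith
  calc ∑ i ∈ s, a i * log (p i)
      ≤ ∑ i ∈ s, (a i * log (a i / A) + (A * p i - a i)) := sum_le_sum hterm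
    _ ≤ ∑ i ∈ s, a i * log (a i / A) := by rw [sum_add_distrib]; linarith

lemma sum_filter_pos_mul_log_le {ι : Type*} [Fintype ι] {a p : ι → ℝ}
    (ha : ∀ i, 0 ≤ a i) (hp : ∀ i, 0 ≤ p i) (hp_sum : ∑ i, p i = 1)
    (habs : ∀ i, 0 < a i → 0 < p i) :
    ∑ i ∈ univ.filter (0 < a ·), a i * log (p i) ≤
      ∑ i ∈ univ.filter (0 < a ·), a i * log (a i / ∑ j, a j) := by
  have hA : ∑ j ∈ univ.filter (0 < a ·), a j = ∑ j, a j :=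
    sum_filter_of_ne fun j _ hj => (ha j).lt_of_ne' hj
  rw [← hA]
  refine sum_mul_log_le_sum_mul_log_div_sum (fun i hi => (mem_filter.mp hi).2)
    (fun i hi => habs i (mem_filter.mp hi).2) ?_
  rw [← hp_sum]
  exact sum_le_sum_of_subset_of_nonneg (subset_univ _) fun i _ _ => hp i

theorem reconstruction_le_mutual_information_general
    {Z : Type*} [Fintype Z] (N : ℕ)
    (q : Fin N → Z → ℝ) (p : Z → Fin N → ℝ)
    (hq_nonneg : ∀ n z, 0 ≤ q n z)
    (hp_nonneg : ∀ z n, 0 ≤ p z n) (hp_sum : ∀ z, ∑ n : Fin N, p z n = 1)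
    (habs : ∀ n z, 0 < q n z → 0 < p z n) :
    (1 / (N : ℝ)) *
        (∑ n : Fin N, ∑ z ∈ Finset.univ.filter (fun z : Z => 0 < q n z),
          q n z * Real.log (p z n)) + Real.log N ≤
      Real.log N -
        (-∑ zn ∈ Finset.univ.filter
              (fun zn : Z × Fin N => 0 < q zn.2 zn.1 / (N : ℝ)),
            (q zn.2 zn.1 / (N : ℝ)) *
              Real.log ((q zn.2 zn.1 / (N : ℝ)) /
                ((1 / (N : ℝ)) * ∑ n' : Fin N, q n' zn.1))) := by
  have hrecon : ∑ n : Fin N, ∑ z ∈ univ.filter (fun z : Z => 0 < q n z), q n z * log (p z n) =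
      ∑ z, ∑ n ∈ univ.filter (0 < q · z), q n z * log (p z n) := by
    simp only [sum_filter]
    exact sum_comm
  have hcond : ∑ zn ∈ univ.filter (fun zn : Z × Fin N => 0 < q zn.2 zn.1 / (N : ℝ)),
        (q zn.2 zn.1 / N) * log ((q zn.2 zn.1 / N) / ((1 / N) * ∑ n', q n' zn.1)) =
      1 / N * ∑ z, ∑ n ∈ univ.filter (0 < q · z), q n z * log (q n z / ∑ n', q n' z) := by
    rw [sum_filter, Fintype.sum_prod_type, mul_sum]
    refine sum_congr rfl fun z _ => ?_
    rw [sum_filter, mul_sum]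
    refine sum_congr rfl fun n _ => ?_
    have hN : (0 : ℝ) < N := by exact_mod_cast n.pos
    simp only [div_pos_iff_of_pos_right hN, one_div, ← div_eq_inv_mul,
      div_div_div_cancel_right₀ hN.ne']
    split_ifs <;> ring
  rw [hrecon, hcond, sub_neg_eq_add, add_comm (log _)]
  gcongr ?_ + _
  refine mul_le_mul_of_nonneg_left (sum_le_sum fun z _ => ?_) (by positivity)
  exact sum_filter_pos_mul_log_le (fun n => hq_nonneg n z) (fun n => hp_nonneg z n) (hp_sum z)
    fun n => habs n z

/-- With encoder posteriors `q(·|n)` on `Z` for `n ∈ {1,…,N}` (index uniform),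
decoder `p(·|z)` on the index set with `p(n|z) > 0` whenever `q(z|n) > 0`, and joint
`q(z,n) = q(z|n)/N`, the reconstruction term lower-bounds the mutual information:
`(1/N)·∑_n ∑_{z: q(z|n)>0} q(z|n) log p(n|z) + log N ≤ I_q(Z,n)`,
where `I_q(Z,n) = H_q(n) - H_q(n|Z) = log N - H_q(n|Z)` and
`H_q(n|Z) = -∑_{(z,n): q(z,n)>0} q(z,n) log(q(z,n)/q̄(z))` with
`q̄(z) = (1/N)∑_n q(z|n)`. -/
theorem reconstruction_le_mutual_information
    {Z : Type*} [Fintype Z] [Nonempty Z] (N : ℕ) (hN : 0 < N)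
    (q : Fin N → Z → ℝ) (p : Z → Fin N → ℝ)
    (hq_nonneg : ∀ n z, 0 ≤ q n z) (hq_sum : ∀ n, ∑ z : Z, q n z = 1)
    (hp_nonneg : ∀ z n, 0 ≤ p z n) (hp_sum : ∀ z, ∑ n : Fin N, p z n = 1)
    (habs : ∀ n z, 0 < q n z → 0 < p z n) :
    (1 / (N : ℝ)) *
        (∑ n : Fin N, ∑ z ∈ Finset.univ.filter (fun z : Z => 0 < q n z),
          q n z * Real.log (p z n)) + Real.log N ≤
      Real.log N -
        (-∑ zn ∈ Finset.univ.filter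
              (fun zn : Z × Fin N => 0 < q zn.2 zn.1 / (N : ℝ)),
            (q zn.2 zn.1 / (N : ℝ)) *
              Real.log ((q zn.2 zn.1 / (N : ℝ)) /
                ((1 / (N : ℝ)) * ∑ n' : Fin N, q n' zn.1))) :=
  reconstruction_le_mutual_information_general N q p hq_nonneg hp_nonneg hp_sum habs
end

section
/- Let Z be a nonempty finite type, let N be a positive integer, let q(·|n) for each n ∈ {1,…,N} be a probability mass function on Z (the encoder posteriors), let p be a probability mass function on Z (the prior) with p(z) > 0 for all z, and let p(·|z) for each z ∈ Z be a probability mass function on {1,…,N} (the decoder) with p(n|z) > 0 whenever q(z|n) > 0. Define F_E = (1/N)∑_n ∑_{z: q(z|n)>0} q(z|n) log p(n|z) + log N and F_R = (1/N)∑_n KL(q(·|n) ‖ p), and let β ∈ ℝ. Then the β-weighted training objective F = -F_E + β·F_R satisfies the lower bound F ≥ (β - 1)·I_q(Z,n) + β·KL(q̄ ‖ p), where q̄(z) = (1/N)∑_n q(z|n) is the aggregated posterior. -/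
/-!
Write `I` for the mutual information and `K` for `KL(q̄ ‖ p)`. Splitting `log (q/p)` as
`log (q/q̄) + log (q̄/p)` gives the exact identity `F_R = I + K`, and
`I - F_E = KL(q(z,n) ‖ q̄(z) p(n|z)) ≥ 0` by Gibbs' inequality. Hence
`-F_E + β F_R ≥ -I + β (I + K)`, for every sign of `β`.
-/

open Real Finset

theorem Finset.sum_filter_pos_mul_eq_sum {A : Type*} [Fintype A] {f : A → ℝ}
    (hf : ∀ a, 0 ≤ f a) (g : A → ℝ) :
    ∑ a ∈ univ.filter (fun a => 0 < f a), f a * g a = ∑ a, f a * g a :=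
  sum_filter_of_ne fun a _ h => (hf a).lt_of_ne' (left_ne_zero_of_mul h)

namespace Real

theorem mul_log_div_eq_add {x y z : ℝ} (h : x ≠ 0 → y ≠ 0 ∧ z ≠ 0) :
    x * log (x / z) = x * log (x / y) + x * log (y / z) := by
  rcases eq_or_ne x 0 with rfl | hx
  · simp
  obtain ⟨hy, hz⟩ := h hx
  rw [← mul_add, ← log_mul (div_ne_zero hx hy) (div_ne_zero hy hz), div_mul_div_cancel₀ hy]

theorem mul_log_div_mul_eq_sub {x y w : ℝ} (h : x ≠ 0 → y ≠ 0 ∧ w ≠ 0) :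
    x * log (x / (y * w)) = x * log (x / y) - x * log w := by
  rcases eq_or_ne x 0 with rfl | hx
  · simp
  obtain ⟨hy, hw⟩ := h hx
  rw [← div_div, log_div (div_ne_zero hx hy) hw, mul_sub]

theorem sub_le_mul_log_div {a b : ℝ} (ha : 0 ≤ a) (hb : 0 ≤ b) (hab : 0 < a → 0 < b) :
    a - b ≤ a * log (a / b) := by
  rcases ha.eq_or_lt with rfl | ha
  · simpa using hb
  have key := one_sub_inv_le_log_of_pos (div_pos ha (hab ha))
  rw [inv_div] at key
  calc a - b = a * (1 - b / a) := by field_simp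
    _ ≤ a * log (a / b) := mul_le_mul_of_nonneg_left key ha.le

end Real

/-- Gibbs' inequality for finite measures of arbitrary total mass. -/
theorem sum_sub_sum_le_sum_mul_log_div {A : Type*} [Fintype A] {μ ν : A → ℝ}
    (hμ : ∀ a, 0 ≤ μ a) (hν : ∀ a, 0 ≤ ν a) (hμν : ∀ a, 0 < μ a → 0 < ν a) :
    ∑ a, μ a - ∑ a, ν a ≤ ∑ a, μ a * log (μ a / ν a) := by
  rw [← sum_sub_distrib]
  exact sum_le_sum fun a _ => sub_le_mul_log_div (hμ a) (hν a) (hμν a)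

section Mixture

variable {ι Z : Type*} [Fintype ι] [Fintype Z] {q : ι → Z → ℝ}

theorem sum_sum_mul_log_div_eq_add (r : Z → ℝ) {p : Z → ℝ}
    (hr : ∀ i z, q i z ≠ 0 → r z ≠ 0) (hp : ∀ z, p z ≠ 0) :
    ∑ i, ∑ z, q i z * log (q i z / p z) =
      ∑ i, ∑ z, q i z * log (q i z / r z) + ∑ z, (∑ i, q i z) * log (r z / p z) := by
  have hsplit : ∀ i z, q i z * log (q i z / p z) =
      q i z * log (q i z / r z) + q i z * log (r z / p z) :=
    fun i z => mul_log_div_eq_add fun h => ⟨hr i z h, hp z⟩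
  simp only [hsplit, sum_add_distrib, sum_mul]
  rw [sum_comm (f := fun i z => q i z * log (r z / p z))]

theorem sum_sum_mul_log_le_sum_sum_mul_log_div_sum (hq : ∀ i z, 0 ≤ q i z)
    {pd : Z → ι → ℝ} (hpd : ∀ z i, 0 ≤ pd z i) (hpd_sum : ∀ z, ∑ i, pd z i ≤ 1)
    (habs : ∀ i z, 0 < q i z → 0 < pd z i) :
    ∑ i, ∑ z, q i z * log (pd z i) ≤ ∑ i, ∑ z, q i z * log (q i z / ∑ j, q j z) := by
  have hs : ∀ z, 0 ≤ ∑ j, q j z := fun z => sum_nonneg fun j _ => hq j z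
  have hs_pos : ∀ i z, 0 < q i z → 0 < ∑ j, q j z := fun i z h =>
    h.trans_le (single_le_sum (fun j _ => hq j z) (mem_univ i))
  have gibbs := sum_sub_sum_le_sum_mul_log_div (A := ι × Z) (μ := fun x => q x.1 x.2)
    (ν := fun x => (∑ j, q j x.2) * pd x.2 x.1) (fun x => hq x.1 x.2)
    (fun x => mul_nonneg (hs x.2) (hpd x.2 x.1))
    (fun x h => mul_pos (hs_pos x.1 x.2 h) (habs x.1 x.2 h))
  have hmass : ∑ x : ι × Z, (∑ j, q j x.2) * pd x.2 x.1 ≤ ∑ x : ι × Z, q x.1 x.2 := by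
    simp only [Fintype.sum_prod_type_right, ← mul_sum]
    refine sum_le_sum fun z _ => ?_
    exact mul_le_of_le_one_right (hs z) (hpd_sum z)
  have hsplit : ∀ i z, q i z * log (q i z / ((∑ j, q j z) * pd z i)) =
      q i z * log (q i z / ∑ j, q j z) - q i z * log (pd z i) := fun i z =>
    mul_log_div_mul_eq_sub fun h => ⟨(hs_pos i z ((hq i z).lt_of_ne' h)).ne',
      (habs i z ((hq i z).lt_of_ne' h)).ne'⟩
  simp only [Fintype.sum_prod_type, hsplit, sum_sub_distrib] at gibbs hmass
  linarith

end Mixture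

section Aggregate

variable {Z : Type*} {N : ℕ}

noncomputable def aggregatePosterior (q : Fin N → Z → ℝ) (z : Z) : ℝ := 1 / (N : ℝ) * ∑ n, q n z

variable {q : Fin N → Z → ℝ}

theorem aggregatePosterior_pos (hq : ∀ n z, 0 ≤ q n z) {n : Fin N} {z : Z} (h : 0 < q n z) :
    0 < aggregatePosterior q z :=
  mul_pos (one_div_pos.mpr (Nat.cast_pos.mpr n.pos))
    (h.trans_le (single_le_sum (fun j _ => hq j z) (mem_univ n)))

theorem aggregatePosterior_nonneg (hq : ∀ n z, 0 ≤ q n z) (z : Z) :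
    0 ≤ aggregatePosterior q z :=
  mul_nonneg (by positivity) (sum_nonneg fun n _ => hq n z)

theorem sum_eq_mul_aggregatePosterior [Fintype Z] (hN : N ≠ 0) (q : Fin N → Z → ℝ) (z : Z) :
    ∑ n, q n z = aggregatePosterior q z * N := by
  rw [aggregatePosterior]
  field_simp

theorem sum_mul_log_div_aggregatePosterior_eq [Fintype Z] :
    ∑ x : Z × Fin N, q x.2 x.1 / N * log (q x.2 x.1 / N / (aggregatePosterior q x.1 * (1 / N))) =
      1 / N * ∑ n, ∑ z, q n z * log (q n z / aggregatePosterior q z) := by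
  rw [Fintype.sum_prod_type_right, mul_sum]
  refine sum_congr rfl fun n _ => ?_
  have hN : (N : ℝ) ≠ 0 := Nat.cast_ne_zero.mpr n.pos.ne'
  rw [mul_sum]
  refine sum_congr rfl fun z _ => ?_
  rw [mul_one_div, div_div_div_cancel_right₀ hN]
  ring

theorem sum_sum_mul_log_div_eq_add_aggregatePosterior [Fintype Z] (hN : N ≠ 0)
    (hq : ∀ n z, 0 ≤ q n z) {p : Z → ℝ} (hp : ∀ z, p z ≠ 0) :
    1 / N * ∑ n, ∑ z, q n z * log (q n z / p z) =
      1 / N * ∑ n, ∑ z, q n z * log (q n z / aggregatePosterior q z) +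
        ∑ z, aggregatePosterior q z * log (aggregatePosterior q z / p z) := by
  rw [sum_sum_mul_log_div_eq_add (aggregatePosterior q)
    (fun n z h => (aggregatePosterior_pos hq ((hq n z).lt_of_ne' h)).ne') hp]
  simp only [sum_eq_mul_aggregatePosterior hN, mul_comm _ (N : ℝ), mul_assoc, ← mul_sum]
  field_simp

theorem sum_sum_mul_log_add_log_le [Fintype Z] (hN : 0 < N) (hq : ∀ n z, 0 ≤ q n z)
    (hq_sum : ∀ n, ∑ z, q n z = 1) {pd : Z → Fin N → ℝ} (hpd : ∀ z n, 0 ≤ pd z n)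
    (hpd_sum : ∀ z, ∑ n, pd z n = 1) (habs : ∀ n z, 0 < q n z → 0 < pd z n) :
    1 / N * ∑ n, ∑ z, q n z * log (pd z n) + log N ≤
      1 / N * ∑ n, ∑ z, q n z * log (q n z / aggregatePosterior q z) := by
  have hNr : (0 : ℝ) < N := Nat.cast_pos.mpr hN
  have h := sum_sum_mul_log_le_sum_sum_mul_log_div_sum hq hpd (fun z => (hpd_sum z).le) habs
  have hsplit : ∀ n z, q n z * log (q n z / ∑ j, q j z) =
      q n z * log (q n z / aggregatePosterior q z) - q n z * log N := fun n z => by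
    rw [sum_eq_mul_aggregatePosterior hN.ne']
    exact mul_log_div_mul_eq_sub fun h =>
      ⟨(aggregatePosterior_pos hq ((hq n z).lt_of_ne' h)).ne', hNr.ne'⟩
  simp only [hsplit, sum_sub_distrib, ← sum_mul, hq_sum, one_mul, sum_const, card_univ,
    Fintype.card_fin, nsmul_eq_mul] at h
  have h' := mul_le_mul_of_nonneg_left h (one_div_nonneg.mpr hNr.le)
  rw [mul_sub, ← mul_assoc, one_div_mul_cancel hNr.ne', one_mul] at h'
  linarith

end Aggregate

theorem beta_objective_lower_bound_general
    {Z : Type*} [Fintype Z] (N : ℕ) (hN : 0 < N)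
    (q : Fin N → Z → ℝ) (p : Z → ℝ) (pd : Z → Fin N → ℝ) (β : ℝ)
    (hq_nonneg : ∀ n z, 0 ≤ q n z) (hq_sum : ∀ n, ∑ z : Z, q n z = 1)
    (hp_pos : ∀ z, 0 < p z)
    (hpd_nonneg : ∀ z n, 0 ≤ pd z n) (hpd_sum : ∀ z, ∑ n : Fin N, pd z n = 1)
    (habs : ∀ n z, 0 < q n z → 0 < pd z n) :
    -((1 / (N : ℝ)) *
          (∑ n : Fin N, ∑ z ∈ Finset.univ.filter (fun z : Z => 0 < q n z),
            q n z * Real.log (pd z n)) + Real.log N) +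
        β * ((1 / (N : ℝ)) *
          ∑ n : Fin N, ∑ z ∈ Finset.univ.filter (fun z : Z => 0 < q n z),
            q n z * Real.log (q n z / p z)) ≥
      (β - 1) *
          (∑ zn ∈ Finset.univ.filter
                (fun zn : Z × Fin N => 0 < q zn.2 zn.1 / (N : ℝ)),
              (q zn.2 zn.1 / (N : ℝ)) *
                Real.log ((q zn.2 zn.1 / (N : ℝ)) /
                  (((1 / (N : ℝ)) * ∑ n' : Fin N, q n' zn.1) * (1 / (N : ℝ))))) +
        β * ∑ z ∈ Finset.univ.filter
                (fun z : Z => 0 < (1 / (N : ℝ)) * ∑ n' : Fin N, q n' z),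
              ((1 / (N : ℝ)) * ∑ n' : Fin N, q n' z) *
                Real.log (((1 / (N : ℝ)) * ∑ n' : Fin N, q n' z) / p z) := by
  simp only [← aggregatePosterior.eq_1]
  simp only [sum_filter_pos_mul_eq_sum (hq_nonneg _),
    sum_filter_pos_mul_eq_sum (aggregatePosterior_nonneg hq_nonneg),
    sum_filter_pos_mul_eq_sum (f := fun x : Z × Fin N => q x.2 x.1 / N)
      fun x => div_nonneg (hq_nonneg x.2 x.1) (Nat.cast_nonneg N),
    sum_mul_log_div_aggregatePosterior_eq]
  rw [sum_sum_mul_log_div_eq_add_aggregatePosterior hN.ne' hq_nonneg fun z => (hp_pos z).ne']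
  linear_combination sum_sum_mul_log_add_log_le hN hq_nonneg hq_sum hpd_nonneg hpd_sum habs

/-- With encoder posteriors `q(·|n)`, an everywhere-positive prior `p`,
and a decoder `pd(·|z)` with `pd(n|z) > 0` whenever `q(z|n) > 0`, set
`F_E = (1/N)∑_n ∑_{z: q(z|n)>0} q(z|n) log pd(n|z) + log N` and
`F_R = (1/N)∑_n KL(q(·|n)‖p)`. Then for any `β ∈ ℝ`, the objective
`F = -F_E + β·F_R` satisfies `F ≥ (β-1)·I_q(Z,n) + β·KL(q̄‖p)`, where
`q̄(z) = (1/N)∑_n q(z|n)` and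
`I_q(Z,n) = ∑_{(z,n): q(z,n)>0} q(z,n) log(q(z,n)/(q̄(z)·(1/N)))`
with joint `q(z,n) = q(z|n)/N`. -/
theorem beta_objective_lower_bound
    {Z : Type*} [Fintype Z] [Nonempty Z] (N : ℕ) (hN : 0 < N)
    (q : Fin N → Z → ℝ) (p : Z → ℝ) (pd : Z → Fin N → ℝ) (β : ℝ)
    (hq_nonneg : ∀ n z, 0 ≤ q n z) (hq_sum : ∀ n, ∑ z : Z, q n z = 1)
    (hp_pos : ∀ z, 0 < p z) (hp_sum : ∑ z : Z, p z = 1)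
    (hpd_nonneg : ∀ z n, 0 ≤ pd z n) (hpd_sum : ∀ z, ∑ n : Fin N, pd z n = 1)
    (habs : ∀ n z, 0 < q n z → 0 < pd z n) :
    -((1 / (N : ℝ)) *
          (∑ n : Fin N, ∑ z ∈ Finset.univ.filter (fun z : Z => 0 < q n z),
            q n z * Real.log (pd z n)) + Real.log N) +
        β * ((1 / (N : ℝ)) *
          ∑ n : Fin N, ∑ z ∈ Finset.univ.filter (fun z : Z => 0 < q n z),
            q n z * Real.log (q n z / p z)) ≥
      (β - 1) *
          (∑ zn ∈ Finset.univ.filter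
                (fun zn : Z × Fin N => 0 < q zn.2 zn.1 / (N : ℝ)),
              (q zn.2 zn.1 / (N : ℝ)) *
                Real.log ((q zn.2 zn.1 / (N : ℝ)) /
                  (((1 / (N : ℝ)) * ∑ n' : Fin N, q n' zn.1) * (1 / (N : ℝ))))) +
        β * ∑ z ∈ Finset.univ.filter
                (fun z : Z => 0 < (1 / (N : ℝ)) * ∑ n' : Fin N, q n' z),
              ((1 / (N : ℝ)) * ∑ n' : Fin N, q n' z) *
                Real.log (((1 / (N : ℝ)) * ∑ n' : Fin N, q n' z) / p z) :=
  beta_objective_lower_bound_general N hN q p pd β hq_nonneg hq_sum hp_pos hpd_nonneg hpd_sum habs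
end
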